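/- arXiv:math/0409440 — 6 statements merged into one kernel-verified Lean document; each statement's English description precedes it below -/
import Mathlib

section
/- S-equivalence is not a sufficient condition for two links to be related by doubled-delta moves, in the following algebraic sense: there exist two S-equivalent (indeed congruent) 2×2 Seifert matrices M₀ = [[-1,-1],[-1,-1]] and M₁ = [[-1,0],[0,0]] arising from 3-component links whose multisets of pairwise linking numbers {-1,2,2} and {1,0,0} are different. Formally: [[-1,-1],[-1,-1]] and [[-1,0],[0,0]] are congruent over ℤ, yet the multisets {-1,2,2} and {1,0,0} are not equal. -/
open Matrix

/-- S-equivalence does not imply doubled-delta equivalence: the Seifert matrices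
`[[-1,-1],[-1,-1]]` and `[[-1,0],[0,0]]` are congruent over `ℤ`, yet the corresponding
multisets of pairwise linking numbers `{-1,2,2}` and `{1,0,0}` differ. -/
theorem stmt2 :
    (∃ P : Matrix (Fin 2) (Fin 2) ℤ, (P.det = 1 ∨ P.det = -1) ∧
      Pᵀ * !![-1, 0; 0, 0] * P = !![-1, -1; -1, -1]) ∧
    ({-1, 2, 2} : Multiset ℤ) ≠ ({1, 0, 0} : Multiset ℤ) := by
  refine ⟨⟨!![1, 1; 0, 1], Or.inl (by simp [Matrix.det_fin_two_of]), by decide⟩, by decide⟩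
end

section
/- Pairwise linking number is an invariant of Strong S-equivalence at the matrix level: if two ordered Seifert matrices M and M′ for m-component links are Strongly S-equivalent, then their upper-left (m-1)×(m-1) blocks agree; consequently lk(L_i, L_j) = M_{i,j} = M′_{i,j} for i ≠ j, 1 ≤ i,j ≤ m-1, and lk(L_i, L_m) = -∑_{j=1}^{m-1} M_{i,j} = -∑_{j=1}^{m-1} M′_{i,j}. -/
open Matrix

/-- Enlargement of the first type: `((V, yᵀ, 0), (x, z, 1), (0, 0, 0))`. -/
def enlargeA (n : ℕ) (V : Matrix (Fin n) (Fin n) ℤ) (x y : Fin n → ℤ) (z : ℤ) :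
    Matrix (Fin (n + 2)) (Fin (n + 2)) ℤ :=
  Matrix.of fun i j =>
    if hi : (i : ℕ) < n then
      if hj : (j : ℕ) < n then V ⟨i, hi⟩ ⟨j, hj⟩
      else if (j : ℕ) = n then y ⟨i, hi⟩ else 0
    else if (i : ℕ) = n then
      if hj : (j : ℕ) < n then x ⟨j, hj⟩ else if (j : ℕ) = n then z else 1
    else 0

/-- Enlargement of the second type: `((V, yᵀ, 0), (x, z, 0), (0, 1, 0))`. -/
def enlargeB (n : ℕ) (V : Matrix (Fin n) (Fin n) ℤ) (x y : Fin n → ℤ) (z : ℤ) :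
    Matrix (Fin (n + 2)) (Fin (n + 2)) ℤ :=
  Matrix.of fun i j =>
    if hi : (i : ℕ) < n then
      if hj : (j : ℕ) < n then V ⟨i, hi⟩ ⟨j, hj⟩
      else if (j : ℕ) = n then y ⟨i, hi⟩ else 0
    else if (i : ℕ) = n then
      if hj : (j : ℕ) < n then x ⟨j, hj⟩ else if (j : ℕ) = n then z else 0
    else if (j : ℕ) = n then 1 else 0

/-- `A` has block form `(I *; 0 *)` with `I` the upper-left `r × r` identity. -/
def BlockFix (r : ℕ) {n : ℕ} (A : Matrix (Fin n) (Fin n) ℤ) : Prop :=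
  (∀ i j : Fin n, (i : ℕ) < r → (j : ℕ) < r →
    A i j = if (i : ℕ) = (j : ℕ) then 1 else 0) ∧
  (∀ i j : Fin n, ¬ (i : ℕ) < r → (j : ℕ) < r → A i j = 0)

/-- One step of Strong S-equivalence with block size `r = m - 1`: a strong congruence,
an enlargement with the first `r` entries of `x` and `y` equal, or such a reduction
which does not shrink the matrix below size `r`. -/
inductive StrongStep (r : ℕ) :
    (Σ n, Matrix (Fin n) (Fin n) ℤ) → (Σ n, Matrix (Fin n) (Fin n) ℤ) → Prop
  | congr {n} (V W P : Matrix (Fin n) (Fin n) ℤ) (hP : BlockFix r P)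
      (hdet : P.det = 1 ∨ P.det = -1) (hW : W = Pᵀ * V * P) :
      StrongStep r ⟨n, V⟩ ⟨n, W⟩
  | enlA {n} (V : Matrix (Fin n) (Fin n) ℤ) (x y : Fin n → ℤ) (z : ℤ)
      (hxy : ∀ i : Fin n, (i : ℕ) < r → x i = y i) :
      StrongStep r ⟨n, V⟩ ⟨n + 2, enlargeA n V x y z⟩
  | enlB {n} (V : Matrix (Fin n) (Fin n) ℤ) (x y : Fin n → ℤ) (z : ℤ)
      (hxy : ∀ i : Fin n, (i : ℕ) < r → x i = y i) :
      StrongStep r ⟨n, V⟩ ⟨n + 2, enlargeB n V x y z⟩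
  | redA {n} (V : Matrix (Fin n) (Fin n) ℤ) (x y : Fin n → ℤ) (z : ℤ)
      (hxy : ∀ i : Fin n, (i : ℕ) < r → x i = y i) (hn : r ≤ n) :
      StrongStep r ⟨n + 2, enlargeA n V x y z⟩ ⟨n, V⟩
  | redB {n} (V : Matrix (Fin n) (Fin n) ℤ) (x y : Fin n → ℤ) (z : ℤ)
      (hxy : ∀ i : Fin n, (i : ℕ) < r → x i = y i) (hn : r ≤ n) :
      StrongStep r ⟨n + 2, enlargeB n V x y z⟩ ⟨n, V⟩

/-- Strong S-equivalence of (ordered Seifert) matrices. -/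
def StrongSEquiv (r : ℕ) :
    (Σ n, Matrix (Fin n) (Fin n) ℤ) → (Σ n, Matrix (Fin n) (Fin n) ℤ) → Prop :=
  Relation.ReflTransGen (StrongStep r)

lemma blockfix_col {r n : ℕ} {P : Matrix (Fin n) (Fin n) ℤ} (hP : BlockFix r P)
    (j : Fin n) (hj : (j : ℕ) < r) (k : Fin n) : P k j = if k = j then 1 else 0 := by
  by_cases hk : (k : ℕ) < r
  · rw [hP.1 k j hk hj]; simp [Fin.ext_iff]
  · rw [hP.2 k j hk hj]
    have hkj : k ≠ j := fun h => hk (h ▸ hj)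
    simp [hkj]

lemma step_inv {r : ℕ} {p q : Σ n, Matrix (Fin n) (Fin n) ℤ}
    (h : StrongStep r p q) (hp : r ≤ p.1) :
    ∃ hq : r ≤ q.1, ∀ (i j : ℕ) (hi : i < r) (hj : j < r),
      p.2 ⟨i, lt_of_lt_of_le hi hp⟩ ⟨j, lt_of_lt_of_le hj hp⟩ =
      q.2 ⟨i, lt_of_lt_of_le hi hq⟩ ⟨j, lt_of_lt_of_le hj hq⟩ := by
  induction h with
  | congr V W P hP hdet hW =>
    dsimp only at hp ⊢
    refine ⟨hp, fun i j hi hj => ?_⟩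
    subst hW
    rw [Matrix.mul_apply]
    simp only [blockfix_col hP ⟨j, lt_of_lt_of_le hj hp⟩ hj, mul_ite, mul_one, mul_zero,
      Finset.sum_ite_eq' Finset.univ, Finset.mem_univ, if_true]
    rw [Matrix.mul_apply]
    simp only [Matrix.transpose_apply, blockfix_col hP ⟨i, lt_of_lt_of_le hi hp⟩ hi,
      ite_mul, one_mul, zero_mul, Finset.sum_ite_eq Finset.univ, Finset.mem_univ, if_true]
    simp
  | enlA V x y z hxy =>
    dsimp only at hp ⊢
    refine ⟨le_trans hp (by omega), fun i j hi hj => ?_⟩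
    have hi' : i < _ := lt_of_lt_of_le hi hp
    have hj' : j < _ := lt_of_lt_of_le hj hp
    simp [enlargeA, hi', hj']
  | enlB V x y z hxy =>
    dsimp only at hp ⊢
    refine ⟨le_trans hp (by omega), fun i j hi hj => ?_⟩
    have hi' : i < _ := lt_of_lt_of_le hi hp
    have hj' : j < _ := lt_of_lt_of_le hj hp
    simp [enlargeB, hi', hj']
  | redA V x y z hxy hn =>
    dsimp only at hp ⊢
    refine ⟨hn, fun i j hi hj => ?_⟩
    have hi' : i < _ := lt_of_lt_of_le hi hn
    have hj' : j < _ := lt_of_lt_of_le hj hn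
    simp [enlargeA, hi', hj']
  | redB V x y z hxy hn =>
    dsimp only at hp ⊢
    refine ⟨hn, fun i j hi hj => ?_⟩
    have hi' : i < _ := lt_of_lt_of_le hi hn
    have hj' : j < _ := lt_of_lt_of_le hj hn
    simp [enlargeB, hi', hj']

lemma chain_inv {r : ℕ} {p q : Σ n, Matrix (Fin n) (Fin n) ℤ}
    (h : StrongSEquiv r p q) (hp : r ≤ p.1) :
    ∃ hq : r ≤ q.1, ∀ (i j : ℕ) (hi : i < r) (hj : j < r),
      p.2 ⟨i, lt_of_lt_of_le hi hp⟩ ⟨j, lt_of_lt_of_le hj hp⟩ =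
      q.2 ⟨i, lt_of_lt_of_le hi hq⟩ ⟨j, lt_of_lt_of_le hj hq⟩ := by
  induction h with
  | refl => exact ⟨hp, fun _ _ _ _ => rfl⟩
  | tail hab hbc ih =>
    obtain ⟨hb, h1⟩ := ih
    obtain ⟨hc, h2⟩ := step_inv hbc hb
    exact ⟨hc, fun i j hi hj => (h1 i j hi hj).trans (h2 i j hi hj)⟩

/-- Pairwise linking numbers are invariants of Strong S-equivalence at the matrix level:
strongly S-equivalent ordered Seifert matrices have equal upper-left `(m-1) × (m-1)`
blocks, hence equal entries `M_{i,j} = lk(L_i, L_j)` for `i ≠ j`, and equal row sums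
`-∑_{j<m-1} M_{i,j} = lk(L_i, L_m)`. -/
theorem stmt4 (m : ℕ) {n n' : ℕ} (hn : m - 1 ≤ n) (hn' : m - 1 ≤ n')
    (M : Matrix (Fin n) (Fin n) ℤ) (M' : Matrix (Fin n') (Fin n') ℤ)
    (h : StrongSEquiv (m - 1) ⟨n, M⟩ ⟨n', M'⟩) :
    (∀ (i j : ℕ) (hi : i < m - 1) (hj : j < m - 1),
      M ⟨i, lt_of_lt_of_le hi hn⟩ ⟨j, lt_of_lt_of_le hj hn⟩ =
        M' ⟨i, lt_of_lt_of_le hi hn'⟩ ⟨j, lt_of_lt_of_le hj hn'⟩) ∧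
    (∀ (i : ℕ) (hi : i < m - 1),
      -∑ j : Fin (m - 1), M ⟨i, lt_of_lt_of_le hi hn⟩ ⟨(j : ℕ), lt_of_lt_of_le j.2 hn⟩ =
      -∑ j : Fin (m - 1), M' ⟨i, lt_of_lt_of_le hi hn'⟩ ⟨(j : ℕ), lt_of_lt_of_le j.2 hn'⟩) := by
  obtain ⟨hq, hblk⟩ := chain_inv h hn
  constructor
  · exact fun i j hi hj => hblk i j hi hj
  · intro i hi
    congr 1
    exact Finset.sum_congr rfl fun j _ => hblk i (j : ℕ) hi j.2
end

section
/- Lemma (reordering reduction-then-enlargement): Suppose M₁ reduces to M₂ = V (i.e., M₁ is an enlargement of V) and M₃ is an enlargement of V. Then there exist matrices M₄ and M₅ such that M₄ is an enlargement of M₁, M₅ = Pᵀ M₄ P for some permutation matrix P with det P = ±1 that fixes the first entries, and M₅ reduces to M₃. Concretely, with M₁ = ((V y₁ᵀ 0),(x₁ z₁ 0),(0 0 0) with 1 in position (n+1,n+2) pattern as in the enlargement form) and M₃ = ((V y₃ᵀ 0),(x₃ z₃ 0),(0 1 0)), the matrix M₄ obtained by appending to V the rows/columns for both (x₁,y₁,z₁)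 and (x₃,y₃,z₃) satisfies: the permutation swapping the two appended 2×2 blocks carries M₄ to a matrix M₅ whose reduction is M₃. -/
open Matrix

/-- Extend a vector in `ℤⁿ` to `ℤ^{n+2}` by zeros. -/
def ext (n : ℕ) (x : Fin n → ℤ) : Fin (n + 2) → ℤ :=
  fun i => if h : (i : ℕ) < n then x ⟨i, h⟩ else 0

/-!
Writing `Mₖ`'s appended data as `(xₖ, yₖ, zₖ)`, the double enlargement has the block form
```
  V   y₁  0   y₃  0
  x₁  z₁  0   0   0
  0   1   0   0   0
  x₃  0   0   z₃  0
  0   0   0   1   0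
```
because `ext` pads `x₃, y₃` with zeros. It is symmetric in the two appended `2 × 2` blocks,
so the permutation congruence exchanging them turns the enlargement of `M₁` by `(x₃, y₃, z₃)`
into the enlargement of `M₃` by `(x₁, y₁, z₁)`.
-/

variable {ι R : Type*} [DecidableEq ι] [Fintype ι]

theorem Matrix.transpose_permMatrix_mul_mul_permMatrix [NonAssocSemiring R] (σ : Equiv.Perm ι)
    (M : Matrix ι ι R) :
    (σ.permMatrix R)ᵀ * M * σ.permMatrix R = M.submatrix σ.symm σ.symm := by
  rw [transpose_permMatrix, Equiv.Perm.permMatrix, Equiv.Perm.permMatrix,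
    PEquiv.toMatrix_toPEquiv_mul, PEquiv.mul_toMatrix_toPEquiv, submatrix_submatrix]
  rfl

theorem Matrix.det_permMatrix_eq_one_or_neg_one (σ : Equiv.Perm ι) :
    (σ.permMatrix ℤ).det = 1 ∨ (σ.permMatrix ℤ).det = -1 := by
  rw [det_permutation]
  rcases Int.units_eq_one_or (Equiv.Perm.sign σ) with h | h <;> simp [h]

def swapLastBlocks (n : ℕ) : Equiv.Perm (Fin (n + 4)) :=
  Function.Involutive.toPerm
    (fun i => ⟨if (i : ℕ) < n then (i : ℕ) else
      if (i : ℕ) < n + 2 then (i : ℕ) + 2 else (i : ℕ) - 2, by split_ifs <;> omega⟩)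
    (fun i => by ext; simp only; split_ifs <;> omega)

theorem swapLastBlocks_val (n : ℕ) (i : Fin (n + 4)) :
    (swapLastBlocks n i : ℕ) =
      if (i : ℕ) < n then (i : ℕ) else
        if (i : ℕ) < n + 2 then (i : ℕ) + 2 else (i : ℕ) - 2 :=
  rfl

theorem swapLastBlocks_symm (n : ℕ) : (swapLastBlocks n).symm = swapLastBlocks n :=
  Function.Involutive.toPerm_symm _

theorem enlargeB_enlargeB_submatrix_swapLastBlocks (n : ℕ) (V : Matrix (Fin n) (Fin n) ℤ)
    (x₁ y₁ x₃ y₃ : Fin n → ℤ) (z₁ z₃ : ℤ) :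
    (enlargeB (n + 2) (enlargeB n V x₁ y₁ z₁) (ext n x₃) (ext n y₃) z₃).submatrix
        (swapLastBlocks n) (swapLastBlocks n) =
      enlargeB (n + 2) (enlargeB n V x₃ y₃ z₃) (ext n x₁) (ext n y₁) z₁ := by
  ext i j
  have hi : (i : ℕ) < n ∨ (i : ℕ) = n ∨ (i : ℕ) = n + 1 ∨ (i : ℕ) = n + 2 ∨
      (i : ℕ) = n + 3 := by omega
  have hj : (j : ℕ) < n ∨ (j : ℕ) = n ∨ (j : ℕ) = n + 1 ∨ (j : ℕ) = n + 2 ∨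
      (j : ℕ) = n + 3 := by omega
  rcases hi with hi | hi | hi | hi | hi <;> rcases hj with hj | hj | hj | hj | hj <;>
    simp [enlargeB, _root_.ext, swapLastBlocks_val, hi, hj, Nat.lt_add_right, Nat.ne_of_lt]

/-- Lemma 6.2 (`↘↗ ⟹ ↗≅↘`): if `M₁` reduces to `V` and `M₃` is an enlargement of `V`,
then the double enlargement `M₄` of `M₁` by the data `(x₃, y₃, z₃)` is carried, by a
permutation congruence fixing the first `n` coordinates, to a matrix `M₅` that reduces
to `M₃` (i.e. `M₅` is the enlargement of `M₃` by `(x₁, y₁, z₁)`). -/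
theorem stmt5 (n : ℕ) (V : Matrix (Fin n) (Fin n) ℤ)
    (x₁ y₁ x₃ y₃ : Fin n → ℤ) (z₁ z₃ : ℤ) :
    ∃ (P : Matrix (Fin (n + 4)) (Fin (n + 4)) ℤ) (σ : Equiv.Perm (Fin (n + 4))),
      (∀ i j, P i j = if σ i = j then 1 else 0) ∧
      (∀ i : Fin (n + 4), (i : ℕ) < n → σ i = i) ∧
      (P.det = 1 ∨ P.det = -1) ∧
      Pᵀ * enlargeB (n + 2) (enlargeB n V x₁ y₁ z₁) (ext n x₃) (ext n y₃) z₃ * P =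
        enlargeB (n + 2) (enlargeB n V x₃ y₃ z₃) (ext n x₁) (ext n y₁) z₁ := by
  refine ⟨(swapLastBlocks n).permMatrix ℤ, swapLastBlocks n, fun i j => ?_, fun i hi => ?_,
    det_permMatrix_eq_one_or_neg_one _, ?_⟩
  · simp [PEquiv.toMatrix_apply, Equiv.toPEquiv_apply]
  · ext
    simp [swapLastBlocks_val, hi]
  · rw [transpose_permMatrix_mul_mul_permMatrix, swapLastBlocks_symm,
      enlargeB_enlargeB_submatrix_swapLastBlocks]
end

section
/- Any finite sequence of enlargements, reductions, and congruences relating two matrices can be rewritten as a sequence in which all enlargements precede all reductions (with congruences interspersed). Formally: define a relation on square integer matrices generated by congruence (≅), enlargement (↗), and reduction (↘). If M and M′ are related by a word in these generators, then they are related by a word of the form M ↗* ≅* ↗* ... ↗ ≅ ↘* ≅* M′, i.e., no enlargement occurs after any reduction. -/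
open Matrix

/-- A single step: congruence (`≅`), enlargement (`↗`), or reduction (`↘`). -/
inductive SStep :
    (Σ n, Matrix (Fin n) (Fin n) ℤ) → (Σ n, Matrix (Fin n) (Fin n) ℤ) → Prop
  | congr {n} (V W P : Matrix (Fin n) (Fin n) ℤ)
      (hdet : P.det = 1 ∨ P.det = -1) (hW : W = Pᵀ * V * P) : SStep ⟨n, V⟩ ⟨n, W⟩
  | enlA {n} (V : Matrix (Fin n) (Fin n) ℤ) (x y : Fin n → ℤ) (z : ℤ) :
      SStep ⟨n, V⟩ ⟨n + 2, enlargeA n V x y z⟩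
  | enlB {n} (V : Matrix (Fin n) (Fin n) ℤ) (x y : Fin n → ℤ) (z : ℤ) :
      SStep ⟨n, V⟩ ⟨n + 2, enlargeB n V x y z⟩
  | redA {n} (V : Matrix (Fin n) (Fin n) ℤ) (x y : Fin n → ℤ) (z : ℤ) :
      SStep ⟨n + 2, enlargeA n V x y z⟩ ⟨n, V⟩
  | redB {n} (V : Matrix (Fin n) (Fin n) ℤ) (x y : Fin n → ℤ) (z : ℤ) :
      SStep ⟨n + 2, enlargeB n V x y z⟩ ⟨n, V⟩

/-- An "upward" step: congruence or enlargement (no reductions). -/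
inductive UpStep :
    (Σ n, Matrix (Fin n) (Fin n) ℤ) → (Σ n, Matrix (Fin n) (Fin n) ℤ) → Prop
  | congr {n} (V W P : Matrix (Fin n) (Fin n) ℤ)
      (hdet : P.det = 1 ∨ P.det = -1) (hW : W = Pᵀ * V * P) : UpStep ⟨n, V⟩ ⟨n, W⟩
  | enlA {n} (V : Matrix (Fin n) (Fin n) ℤ) (x y : Fin n → ℤ) (z : ℤ) :
      UpStep ⟨n, V⟩ ⟨n + 2, enlargeA n V x y z⟩
  | enlB {n} (V : Matrix (Fin n) (Fin n) ℤ) (x y : Fin n → ℤ) (z : ℤ) :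
      UpStep ⟨n, V⟩ ⟨n + 2, enlargeB n V x y z⟩

/-- A "downward" step: congruence or reduction (no enlargements). -/
inductive DownStep :
    (Σ n, Matrix (Fin n) (Fin n) ℤ) → (Σ n, Matrix (Fin n) (Fin n) ℤ) → Prop
  | congr {n} (V W P : Matrix (Fin n) (Fin n) ℤ)
      (hdet : P.det = 1 ∨ P.det = -1) (hW : W = Pᵀ * V * P) : DownStep ⟨n, V⟩ ⟨n, W⟩
  | redA {n} (V : Matrix (Fin n) (Fin n) ℤ) (x y : Fin n → ℤ) (z : ℤ) :
      DownStep ⟨n + 2, enlargeA n V x y z⟩ ⟨n, V⟩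
  | redB {n} (V : Matrix (Fin n) (Fin n) ℤ) (x y : Fin n → ℤ) (z : ℤ) :
      DownStep ⟨n + 2, enlargeB n V x y z⟩ ⟨n, V⟩

/-! ### Auxiliary definitions -/

/-- Generic enlargement parametrized by a `Bool` (`true` = type A, `false` = type B). -/
def enl (u : Bool) (n : ℕ) (V : Matrix (Fin n) (Fin n) ℤ) (x y : Fin n → ℤ) (z : ℤ) :
    Matrix (Fin (n + 2)) (Fin (n + 2)) ℤ :=
  if u then enlargeA n V x y z else enlargeB n V x y z

def colY {n : ℕ} (y : Fin n → ℤ) : Matrix (Fin n) (Fin 2) ℤ :=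
  Matrix.of fun i j => if (j : ℕ) = 0 then y i else 0

def rowX {n : ℕ} (x : Fin n → ℤ) : Matrix (Fin 2) (Fin n) ℤ :=
  Matrix.of fun i j => if (i : ℕ) = 0 then x j else 0

def zMat (u : Bool) (z : ℤ) : Matrix (Fin 2) (Fin 2) ℤ :=
  Matrix.of fun i j =>
    if (i : ℕ) = 0 then (if (j : ℕ) = 0 then z else if u then 1 else 0)
    else (if (j : ℕ) = 0 then (if u then 0 else 1) else 0)

lemma fse_symm_lt {n k : ℕ} (i : Fin (n + k)) (h : (i : ℕ) < n) :
    finSumFinEquiv.symm i = Sum.inl ⟨i, h⟩ := by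
  rw [Equiv.symm_apply_eq]; exact Fin.ext rfl

lemma fse_symm_ge {n k : ℕ} (i : Fin (n + k)) (h : n ≤ (i : ℕ)) (h2 : (i : ℕ) - n < k) :
    finSumFinEquiv.symm i = Sum.inr ⟨(i : ℕ) - n, h2⟩ := by
  rw [Equiv.symm_apply_eq]; apply Fin.ext; simp; omega

lemma enl_eq_block (u : Bool) {n : ℕ} (V : Matrix (Fin n) (Fin n) ℤ) (x y : Fin n → ℤ) (z : ℤ) :
    enl u n V x y z =
      (fromBlocks V (colY y) (rowX x) (zMat u z)).submatrix
        finSumFinEquiv.symm finSumFinEquiv.symm := by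
  ext i j
  have hi4 := i.isLt
  have hj4 := j.isLt
  rw [submatrix_apply]
  rcases lt_or_ge (i : ℕ) n with hi | hi <;> rcases lt_or_ge (j : ℕ) n with hj | hj
  · rw [fse_symm_lt _ hi, fse_symm_lt _ hj, fromBlocks_apply₁₁]
    cases u <;> simp only [enl, enlargeA, enlargeB, of_apply, if_true, if_false,
      Bool.false_eq_true, Fin.val_mk] <;> split_ifs <;> first | rfl | omega
  · rw [fse_symm_lt _ hi, fse_symm_ge _ hj (by omega), fromBlocks_apply₁₂]
    cases u <;> simp only [enl, enlargeA, enlargeB, colY, of_apply, if_true, if_false,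
      Bool.false_eq_true, Fin.val_mk] <;> split_ifs <;> first | rfl | omega
  · rw [fse_symm_ge _ hi (by omega), fse_symm_lt _ hj, fromBlocks_apply₂₁]
    cases u <;> simp only [enl, enlargeA, enlargeB, rowX, of_apply, if_true, if_false,
      Bool.false_eq_true, Fin.val_mk] <;> split_ifs <;> first | rfl | omega
  · rw [fse_symm_ge _ hi (by omega), fse_symm_ge _ hj (by omega), fromBlocks_apply₂₂]
    cases u <;> simp only [enl, enlargeA, enlargeB, zMat, of_apply, if_true, if_false,
      Bool.false_eq_true, Fin.val_mk] <;> split_ifs <;> first | rfl | omega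

/-! ### Congruence commutes with enlargement -/

def blkQ {n : ℕ} (P : Matrix (Fin n) (Fin n) ℤ) : Matrix (Fin (n + 2)) (Fin (n + 2)) ℤ :=
  (fromBlocks P 0 0 (1 : Matrix (Fin 2) (Fin 2) ℤ)).submatrix
    finSumFinEquiv.symm finSumFinEquiv.symm

lemma blkQ_det {n : ℕ} (P : Matrix (Fin n) (Fin n) ℤ) : (blkQ P).det = P.det := by
  rw [blkQ, Matrix.det_submatrix_equiv_self, Matrix.det_fromBlocks_zero₂₁, det_one, mul_one]

lemma rowX_mul {n : ℕ} (x : Fin n → ℤ) (P : Matrix (Fin n) (Fin n) ℤ) :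
    rowX x * P = rowX (x ᵥ* P) := by
  ext i j
  by_cases hi : (i : ℕ) = 0 <;>
    simp [rowX, Matrix.mul_apply, hi, Matrix.vecMul, dotProduct, mul_comm]

lemma mul_colY {n : ℕ} (P : Matrix (Fin n) (Fin n) ℤ) (y : Fin n → ℤ) :
    Pᵀ * colY y = colY (Pᵀ *ᵥ y) := by
  ext i j
  by_cases hj : (j : ℕ) = 0 <;>
    simp [colY, Matrix.mul_apply, hj, Matrix.mulVec, dotProduct]

lemma congr_enl (u : Bool) {n : ℕ} (V P : Matrix (Fin n) (Fin n) ℤ) (x y : Fin n → ℤ) (z : ℤ) :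
    enl u n (Pᵀ * V * P) (x ᵥ* P) (Pᵀ *ᵥ y) z =
      (blkQ P)ᵀ * enl u n V x y z * blkQ P := by
  rw [enl_eq_block, enl_eq_block, blkQ, transpose_submatrix, fromBlocks_transpose,
    transpose_zero, transpose_zero, transpose_one,
    Matrix.submatrix_mul_equiv _ _ _ finSumFinEquiv.symm,
    Matrix.submatrix_mul_equiv _ _ _ finSumFinEquiv.symm,
    fromBlocks_multiply, fromBlocks_multiply]
  simp [rowX_mul, mul_colY, Matrix.mul_assoc]

/-! ### Permutation congruences -/

lemma perm_congr {m : ℕ} (e : Equiv.Perm (Fin m)) (M : Matrix (Fin m) (Fin m) ℤ) :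
    ∃ P : Matrix (Fin m) (Fin m) ℤ, (P.det = 1 ∨ P.det = -1) ∧
      M.submatrix e e = Pᵀ * M * P := by
  refine ⟨(e.symm).toPEquiv.toMatrix, ?_, ?_⟩
  · have h := Matrix.det_permutation (R := ℤ) e.symm
    simp only [Equiv.Perm.permMatrix] at h
    rw [h]
    rcases Int.units_eq_one_or (Equiv.Perm.sign e.symm) with h1 | h1 <;> rw [h1] <;> simp
  · have hT : ((e.symm).toPEquiv.toMatrix : Matrix (Fin m) (Fin m) ℤ)ᵀ
        = e.toPEquiv.toMatrix := by
      rw [Equiv.toPEquiv_symm, PEquiv.toMatrix_symm, transpose_transpose]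
    rw [hT, PEquiv.toMatrix_toPEquiv_mul, PEquiv.mul_toMatrix_toPEquiv]
    simp [Matrix.submatrix_submatrix]

/-! ### The swap of two successive enlargements -/

def ext2 {n : ℕ} (u : Fin n → ℤ) : Fin (n + 2) → ℤ :=
  fun i => if h : (i : ℕ) < n then u ⟨i, h⟩ else 0

/-- Column block `((colY y), 0)` over `Fin n ⊕ Fin 2`. -/
def stackC {n : ℕ} (y : Fin n → ℤ) : Matrix (Fin n ⊕ Fin 2) (Fin 2) ℤ :=
  Matrix.of fun i j => match i with
    | .inl i' => colY y i' j
    | .inr _ => 0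

/-- Row block `((rowX x), 0)` over `Fin n ⊕ Fin 2`. -/
def stackR {n : ℕ} (x : Fin n → ℤ) : Matrix (Fin 2) (Fin n ⊕ Fin 2) ℤ :=
  Matrix.of fun i j => match j with
    | .inl j' => rowX x i j'
    | .inr _ => 0

lemma colY_ext2 {n : ℕ} (y : Fin n → ℤ) :
    colY (ext2 y) = (stackC y).submatrix (⇑finSumFinEquiv.symm) id := by
  ext i j
  rcases lt_or_ge (i : ℕ) n with hi | hi
  · rw [submatrix_apply, fse_symm_lt _ hi]
    simp [colY, ext2, stackC, hi]
  · rw [submatrix_apply, fse_symm_ge _ hi (by have := i.isLt; omega)]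
    simp only [stackC, of_apply, colY, ext2, id]
    rw [dif_neg (by omega)]
    split_ifs <;> rfl

lemma rowX_ext2 {n : ℕ} (x : Fin n → ℤ) :
    rowX (ext2 x) = (stackR x).submatrix id (⇑finSumFinEquiv.symm) := by
  ext i j
  rcases lt_or_ge (j : ℕ) n with hj | hj
  · rw [submatrix_apply, fse_symm_lt _ hj]
    simp [rowX, ext2, stackR, hj]
  · rw [submatrix_apply, fse_symm_ge _ hj (by have := j.isLt; omega)]
    simp only [stackR, of_apply, rowX, ext2, id]
    rw [dif_neg (by omega)]
    split_ifs <;> rfl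

lemma fromBlocks_sub {α β γ : Type*} (A : Matrix α α ℤ) (B : Matrix α γ ℤ)
    (C : Matrix γ α ℤ) (D : Matrix γ γ ℤ) (f : β → α) :
    fromBlocks (A.submatrix f f) (B.submatrix f id) (C.submatrix id f) D =
      (fromBlocks A B C D).submatrix (Sum.map f id) (Sum.map f id) := by
  ext i j
  rcases i with i | i <;> rcases j with j | j <;> rfl

/-- The equivalence `(Fin n ⊕ Fin 2) ⊕ Fin 2 ≃ Fin (n + 4)`. -/
def bigE (n : ℕ) : ((Fin n ⊕ Fin 2) ⊕ Fin 2) ≃ Fin (n + 2 + 2) :=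
  (Equiv.sumCongr finSumFinEquiv (Equiv.refl (Fin 2))).trans finSumFinEquiv

/-- The permutation of `(Fin n ⊕ Fin 2) ⊕ Fin 2` exchanging the two `Fin 2` summands. -/
def tau (n : ℕ) : Equiv.Perm ((Fin n ⊕ Fin 2) ⊕ Fin 2) where
  toFun s := match s with
    | .inl (.inl i) => .inl (.inl i)
    | .inl (.inr k) => .inr k
    | .inr k => .inl (.inr k)
  invFun s := match s with
    | .inl (.inl i) => .inl (.inl i)
    | .inl (.inr k) => .inr k
    | .inr k => .inl (.inr k)
  left_inv := by rintro ((i | k) | k) <;> rfl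
  right_inv := by rintro ((i | k) | k) <;> rfl

/-- The permutation of `Fin (n + 4)` exchanging the two added pairs of coordinates. -/
def swapP (n : ℕ) : Equiv.Perm (Fin (n + 2 + 2)) :=
  ((bigE n).symm.trans (tau n)).trans (bigE n)

/-- The double enlargement as a `3 × 3` block matrix. -/
def bigN (u v : Bool) {n : ℕ} (V : Matrix (Fin n) (Fin n) ℤ) (a b : Fin n → ℤ) (c : ℤ)
    (x y : Fin n → ℤ) (z : ℤ) : Matrix ((Fin n ⊕ Fin 2) ⊕ Fin 2) ((Fin n ⊕ Fin 2) ⊕ Fin 2) ℤ :=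
  fromBlocks (fromBlocks V (colY b) (rowX a) (zMat u c)) (stackC y) (stackR x) (zMat v z)

lemma enl_enl_eq (u v : Bool) {n : ℕ} (V : Matrix (Fin n) (Fin n) ℤ)
    (a b : Fin n → ℤ) (c : ℤ) (x y : Fin n → ℤ) (z : ℤ) :
    enl v (n + 2) (enl u n V a b c) (ext2 x) (ext2 y) z =
      (bigN u v V a b c x y z).submatrix ⇑(bigE n).symm ⇑(bigE n).symm := by
  rw [enl_eq_block, enl_eq_block, colY_ext2, rowX_ext2,
    show zMat v z = (zMat v z).submatrix id id from (submatrix_id_id _).symm,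
    fromBlocks_sub]
  rw [submatrix_submatrix]
  rfl

lemma bigN_swap (u v : Bool) {n : ℕ} (V : Matrix (Fin n) (Fin n) ℤ)
    (a b : Fin n → ℤ) (c : ℤ) (x y : Fin n → ℤ) (z : ℤ) :
    bigN u v V a b c x y z = (bigN v u V x y z a b c).submatrix ⇑(tau n) ⇑(tau n) := by
  ext i j
  rcases i with (i | i) | i <;> rcases j with (j | j) | j <;> rfl

lemma enl_swap (u v : Bool) {n : ℕ} (V : Matrix (Fin n) (Fin n) ℤ)
    (a b x y : Fin n → ℤ) (c z : ℤ) :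
    enl v (n + 2) (enl u n V a b c) (ext2 x) (ext2 y) z =
      (enl u (n + 2) (enl v n V x y z) (ext2 a) (ext2 b) c).submatrix
        ⇑(swapP n) ⇑(swapP n) := by
  rw [enl_enl_eq, enl_enl_eq, bigN_swap u v, submatrix_submatrix, submatrix_submatrix]
  ext i j
  simp [submatrix_apply, Function.comp, swapP, Equiv.symm_apply_apply]

/-! ### Step-level lemmas -/

lemma enl_true {n : ℕ} (V : Matrix (Fin n) (Fin n) ℤ) (x y : Fin n → ℤ) (z : ℤ) :
    enl true n V x y z = enlargeA n V x y z := rfl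

lemma enl_false {n : ℕ} (V : Matrix (Fin n) (Fin n) ℤ) (x y : Fin n → ℤ) (z : ℤ) :
    enl false n V x y z = enlargeB n V x y z := rfl

lemma upstep_enl (u : Bool) {n : ℕ} (V : Matrix (Fin n) (Fin n) ℤ) (x y : Fin n → ℤ) (z : ℤ) :
    UpStep ⟨n, V⟩ ⟨n + 2, enl u n V x y z⟩ := by
  cases u
  · exact UpStep.enlB V x y z
  · exact UpStep.enlA V x y z

lemma downstep_red (u : Bool) {n : ℕ} (V : Matrix (Fin n) (Fin n) ℤ) (x y : Fin n → ℤ) (z : ℤ) :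
    DownStep ⟨n + 2, enl u n V x y z⟩ ⟨n, V⟩ := by
  cases u
  · exact DownStep.redB V x y z
  · exact DownStep.redA V x y z

/-- `≅ ↗  ⟹  ↗ ≅`. -/
lemma congr_enl_up {n : ℕ} (V W P : Matrix (Fin n) (Fin n) ℤ)
    (hdet : P.det = 1 ∨ P.det = -1) (hW : W = Pᵀ * V * P)
    (u : Bool) (x y : Fin n → ℤ) (z : ℤ) :
    Relation.ReflTransGen UpStep ⟨n, V⟩ ⟨n + 2, enl u n W x y z⟩ := by
  have hPu : IsUnit P.det := by
    rcases hdet with h | h <;> rw [h]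
    · exact isUnit_one
    · exact isUnit_one.neg
  have : Invertible P := P.invertibleOfIsUnitDet hPu
  have key := congr_enl u V P (x ᵥ* ⅟P) ((⅟P)ᵀ *ᵥ y) z
  have hx : (x ᵥ* ⅟P) ᵥ* P = x := by
    rw [vecMul_vecMul, invOf_mul_self, vecMul_one]
  have hy : Pᵀ *ᵥ ((⅟P)ᵀ *ᵥ y) = y := by
    rw [mulVec_mulVec, ← transpose_mul, invOf_mul_self, transpose_one, one_mulVec]
  rw [hx, hy, ← hW] at key
  exact Relation.ReflTransGen.tail
    (Relation.ReflTransGen.single (upstep_enl u V _ _ z))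
    (UpStep.congr _ _ (blkQ P) (by rw [blkQ_det]; exact hdet) key)

/-- `↘ ≅  ⟹  ≅ ↘`. -/
lemma red_congr {n : ℕ} (V W P : Matrix (Fin n) (Fin n) ℤ)
    (hdet : P.det = 1 ∨ P.det = -1) (hW : W = Pᵀ * V * P)
    (u : Bool) (a b : Fin n → ℤ) (c : ℤ) :
    ∃ D, UpStep ⟨n + 2, enl u n V a b c⟩ D ∧ DownStep D ⟨n, W⟩ := by
  refine ⟨⟨n + 2, enl u n W (a ᵥ* P) (Pᵀ *ᵥ b) c⟩, ?_, downstep_red u W _ _ _⟩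
  refine UpStep.congr _ _ (blkQ P) (by rw [blkQ_det]; exact hdet) ?_
  rw [hW]
  exact congr_enl u V P a b c

/-- `↘ ↗  ⟹  ↗ ≅ ↘`. -/
lemma red_enl (u v : Bool) {n : ℕ} (V : Matrix (Fin n) (Fin n) ℤ)
    (a b : Fin n → ℤ) (c : ℤ) (x y : Fin n → ℤ) (z : ℤ) :
    ∃ D, Relation.ReflTransGen UpStep ⟨n + 2, enl u n V a b c⟩ D ∧
      DownStep D ⟨n + 2, enl v n V x y z⟩ := by
  refine ⟨⟨n + 2 + 2, enl u (n + 2) (enl v n V x y z) (ext2 a) (ext2 b) c⟩, ?_,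
    downstep_red u _ _ _ _⟩
  have hswap := enl_swap u v V a b x y c z
  -- E₂ = E₁.submatrix (swapP n).symm (swapP n).symm
  have h2 : enl u (n + 2) (enl v n V x y z) (ext2 a) (ext2 b) c =
      (enl v (n + 2) (enl u n V a b c) (ext2 x) (ext2 y) z).submatrix
        ⇑(swapP n).symm ⇑(swapP n).symm := by
    rw [hswap, submatrix_submatrix]
    simp [Function.comp, Equiv.apply_symm_apply]
  obtain ⟨Q, hQdet, hQ⟩ := perm_congr (swapP n).symm
    (enl v (n + 2) (enl u n V a b c) (ext2 x) (ext2 y) z)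
  refine Relation.ReflTransGen.tail (Relation.ReflTransGen.single
      (upstep_enl v (enl u n V a b c) (ext2 x) (ext2 y) z)) ?_
  exact UpStep.congr _ _ Q hQdet (h2.trans hQ)

/-! ### Rewriting a down-step followed by an up-step -/

lemma swap1 {A B C : Σ n, Matrix (Fin n) (Fin n) ℤ}
    (hd : DownStep A B) (hu : UpStep B C) :
    ∃ D, Relation.ReflTransGen UpStep A D ∧ (D = C ∨ DownStep D C) := by
  cases hd with
  | congr V W P hdet hW =>
    cases hu with
    | congr _ W' P' hdet' hW' =>
      exact ⟨_, Relation.ReflTransGen.tail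
        (Relation.ReflTransGen.single (UpStep.congr V W P hdet hW))
        (UpStep.congr W W' P' hdet' hW'), Or.inl rfl⟩
    | enlA _ x y z =>
      exact ⟨_, congr_enl_up V W P hdet hW true x y z, Or.inl rfl⟩
    | enlB _ x y z =>
      exact ⟨_, congr_enl_up V W P hdet hW false x y z, Or.inl rfl⟩
  | redA V a b c =>
    cases hu with
    | congr _ W P hdet hW =>
      obtain ⟨D, h1, h2⟩ := red_congr V W P hdet hW true a b c
      exact ⟨D, Relation.ReflTransGen.single h1, Or.inr h2⟩
    | enlA _ x y z =>
      obtain ⟨D, h1, h2⟩ := red_enl true true V a b c x y z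
      exact ⟨D, h1, Or.inr h2⟩
    | enlB _ x y z =>
      obtain ⟨D, h1, h2⟩ := red_enl true false V a b c x y z
      exact ⟨D, h1, Or.inr h2⟩
  | redB V a b c =>
    cases hu with
    | congr _ W P hdet hW =>
      obtain ⟨D, h1, h2⟩ := red_congr V W P hdet hW false a b c
      exact ⟨D, Relation.ReflTransGen.single h1, Or.inr h2⟩
    | enlA _ x y z =>
      obtain ⟨D, h1, h2⟩ := red_enl false true V a b c x y z
      exact ⟨D, h1, Or.inr h2⟩
    | enlB _ x y z =>
      obtain ⟨D, h1, h2⟩ := red_enl false false V a b c x y z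
      exact ⟨D, h1, Or.inr h2⟩

lemma push_one {B C : Σ n, Matrix (Fin n) (Fin n) ℤ}
    (h : Relation.ReflTransGen UpStep B C) :
    ∀ A, DownStep A B →
      ∃ D, Relation.ReflTransGen UpStep A D ∧ Relation.ReflTransGen DownStep D C := by
  induction h using Relation.ReflTransGen.head_induction_on with
  | refl =>
    intro A hd
    exact ⟨A, Relation.ReflTransGen.refl, Relation.ReflTransGen.single hd⟩
  | head hu rest ih =>
    intro A hd
    obtain ⟨E, hupE, hE⟩ := swap1 hd hu
    rcases hE with rfl | hdE
    · exact ⟨C, hupE.trans rest, Relation.ReflTransGen.refl⟩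
    · obtain ⟨D, h1, h2⟩ := ih E hdE
      exact ⟨D, hupE.trans h1, h2⟩

lemma push_many {A B : Σ n, Matrix (Fin n) (Fin n) ℤ}
    (h : Relation.ReflTransGen DownStep A B) :
    ∀ C, UpStep B C →
      ∃ D, Relation.ReflTransGen UpStep A D ∧ Relation.ReflTransGen DownStep D C := by
  induction h using Relation.ReflTransGen.head_induction_on with
  | refl =>
    intro C hu
    exact ⟨C, Relation.ReflTransGen.single hu, Relation.ReflTransGen.refl⟩
  | head hd rest ih =>
    intro C hu
    obtain ⟨D, h1, h2⟩ := ih C hu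
    obtain ⟨D', h1', h2'⟩ := push_one h1 _ hd
    exact ⟨D', h1', h2'.trans h2⟩

/-- Lemma 6.4: any sequence of enlargements, reductions and congruences relating two
matrices can be rewritten so that all enlargements precede all reductions. -/
theorem stmt7 (M M' : Σ n, Matrix (Fin n) (Fin n) ℤ)
    (h : Relation.ReflTransGen SStep M M') :
    ∃ N, Relation.ReflTransGen UpStep M N ∧ Relation.ReflTransGen DownStep N M' := by
  induction h with
  | refl => exact ⟨M, Relation.ReflTransGen.refl, Relation.ReflTransGen.refl⟩
  | tail hMB step ih =>
    obtain ⟨N, hup, hdown⟩ := ih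
    cases step with
    | congr V W P hdet hW =>
      exact ⟨N, hup, hdown.tail (DownStep.congr V W P hdet hW)⟩
    | redA V x y z =>
      exact ⟨N, hup, hdown.tail (DownStep.redA V x y z)⟩
    | redB V x y z =>
      exact ⟨N, hup, hdown.tail (DownStep.redB V x y z)⟩
    | enlA V x y z =>
      obtain ⟨D, h1, h2⟩ := push_many hdown _ (UpStep.enlA V x y z)
      exact ⟨D, hup.trans h1, h2⟩
    | enlB V x y z =>
      obtain ⟨D, h1, h2⟩ := push_many hdown _ (UpStep.enlB V x y z)
      exact ⟨D, hup.trans h1, h2⟩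
end

section
/- If two square integer matrices M and M′ are Strongly S-equivalent, then there exists a matrix N that is obtained from M by a sequence of enlargements and congruences, and is also obtained from M′ by a sequence of enlargements and congruences. (I.e., M and M′ have a common 'stabilization'.) -/
/-!
Reductions can be postponed. If `E` reduces to `M` and `M` is carried to `N` by congruences and
enlargements, then `E` is carried by such moves to an enlargement of `N`: a congruence by `P`
lifts to the congruence by `P ⊕ I₂`, and two successive enlargements may be performed in the
other order, up to congruence by a permutation matrix fixing the first `n` basis vectors
(hence the first `r`, as reductions never go below size `r`).
Walking along a chain of strong moves from `M` to `M'`, every reduction is thereby pushed past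
the common stabilization built so far.
-/

open Matrix

/-- An "upward" strong step: a strong congruence or a strong enlargement. -/
inductive UpStrong (r : ℕ) :
    (Σ n, Matrix (Fin n) (Fin n) ℤ) → (Σ n, Matrix (Fin n) (Fin n) ℤ) → Prop
  | congr {n} (V W P : Matrix (Fin n) (Fin n) ℤ) (hP : BlockFix r P)
      (hdet : P.det = 1 ∨ P.det = -1) (hW : W = Pᵀ * V * P) :
      UpStrong r ⟨n, V⟩ ⟨n, W⟩
  | enlA {n} (V : Matrix (Fin n) (Fin n) ℤ) (x y : Fin n → ℤ) (z : ℤ)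
      (hxy : ∀ i : Fin n, (i : ℕ) < r → x i = y i) :
      UpStrong r ⟨n, V⟩ ⟨n + 2, enlargeA n V x y z⟩
  | enlB {n} (V : Matrix (Fin n) (Fin n) ℤ) (x y : Fin n → ℤ) (z : ℤ)
      (hxy : ∀ i : Fin n, (i : ℕ) < r → x i = y i) :
      UpStrong r ⟨n, V⟩ ⟨n + 2, enlargeB n V x y z⟩

section Enlarge

variable {R : Type*} [CommRing R] {n : ℕ}

/-- The block matrix `(V, y e₀ᵀ; e₀ xᵀ, D)`: `enlargeA` and `enlargeB` are the cases
`D = (z 1; 0 0)` and `D = (z 0; 1 0)`. -/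
def enlarge (V : Matrix (Fin n) (Fin n) R) (x y : Fin n → R) (D : Matrix (Fin 2) (Fin 2) R) :
    Matrix (Fin (n + 2)) (Fin (n + 2)) R :=
  reindex finSumFinEquiv finSumFinEquiv
    (fromBlocks V (vecMulVec y (Pi.single 0 1)) (vecMulVec (Pi.single 0 1) x) D)

def extendOne (P : Matrix (Fin n) (Fin n) R) : Matrix (Fin (n + 2)) (Fin (n + 2)) R :=
  reindex finSumFinEquiv finSumFinEquiv (fromBlocks P 0 0 1)

theorem det_extendOne (P : Matrix (Fin n) (Fin n) R) : (extendOne P).det = P.det := by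
  rw [extendOne, det_reindex_self, det_fromBlocks_zero₂₁, det_one, mul_one]

theorem extendOne_transpose_mul_enlarge_mul (P V : Matrix (Fin n) (Fin n) R) (x y : Fin n → R)
    (D : Matrix (Fin 2) (Fin 2) R) :
    (extendOne P)ᵀ * enlarge V x y D * extendOne P
      = enlarge (Pᵀ * V * P) (x ᵥ* P) (Pᵀ *ᵥ y) D := by
  rw [extendOne, enlarge, enlarge, transpose_reindex, reindex_apply, reindex_apply, reindex_apply,
    reindex_apply, submatrix_mul_equiv, submatrix_mul_equiv, fromBlocks_transpose,
    fromBlocks_multiply, fromBlocks_multiply]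
  simp only [transpose_zero, transpose_one, Matrix.zero_mul, Matrix.mul_zero, Matrix.one_mul,
    Matrix.mul_one, add_zero, zero_add, Matrix.mul_assoc, mul_vecMulVec, vecMulVec_mul,
    zero_mulVec, one_mulVec, zero_vecMulVec]

end Enlarge

theorem enlargeA_eq_enlarge (n : ℕ) (V : Matrix (Fin n) (Fin n) ℤ) (x y : Fin n → ℤ)
    (z : ℤ) :
    enlargeA n V x y z = enlarge V x y !![z, 1; 0, 0] := by
  ext i j
  induction i using Fin.addCases with
  | left i =>
    induction j using Fin.addCases <;> simp [enlargeA, enlarge, vecMulVec_apply, Pi.single_apply]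
  | right i =>
    induction j using Fin.addCases with
    | left j => simp [enlargeA, enlarge, vecMulVec_apply, Pi.single_apply]
    | right j => fin_cases i <;> fin_cases j <;> simp [enlargeA, enlarge]

theorem enlargeB_eq_enlarge (n : ℕ) (V : Matrix (Fin n) (Fin n) ℤ) (x y : Fin n → ℤ)
    (z : ℤ) :
    enlargeB n V x y z = enlarge V x y !![z, 0; 1, 0] := by
  ext i j
  induction i using Fin.addCases with
  | left i =>
    induction j using Fin.addCases <;> simp [enlargeB, enlarge, vecMulVec_apply, Pi.single_apply]
  | right i =>
    induction j using Fin.addCases with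
    | left j => simp [enlargeB, enlarge, vecMulVec_apply, Pi.single_apply, j.isLt.ne]
    | right j => fin_cases i <;> fin_cases j <;> simp [enlargeB, enlarge]

theorem blockFix_iff {r n : ℕ} {A : Matrix (Fin n) (Fin n) ℤ} :
    BlockFix r A ↔
      ∀ i j : Fin n, (j : ℕ) < r → A i j = (1 : Matrix (Fin n) (Fin n) ℤ) i j := by
  simp only [BlockFix, one_apply, ← Fin.ext_iff]
  refine ⟨fun ⟨hlt, hge⟩ i j hj => ?_,
    fun h => ⟨fun i j _ hj => h i j hj, fun i j hi hj => ?_⟩⟩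
  · by_cases hi : (i : ℕ) < r
    · exact hlt i j hi hj
    · rw [hge i j hi hj, if_neg]
      rintro rfl
      exact hi hj
  · rw [h i j hj, if_neg]
    rintro rfl
    exact hi hj

namespace BlockFix

variable {r n : ℕ} {P : Matrix (Fin n) (Fin n) ℤ}

theorem vecMul_apply (hP : BlockFix r P) (x : Fin n → ℤ) {j : Fin n} (hj : (j : ℕ) < r) :
    (x ᵥ* P) j = x j := by
  have hcol : (fun i => P i j) = fun i => (1 : Matrix (Fin n) (Fin n) ℤ) i j :=
    funext fun i => blockFix_iff.1 hP i j hj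
  rw [vecMul, hcol, ← vecMul, vecMul_one]

theorem transpose_mulVec_apply (hP : BlockFix r P) (y : Fin n → ℤ) {j : Fin n}
    (hj : (j : ℕ) < r) : (Pᵀ *ᵥ y) j = y j := by
  rw [← vecMul_transpose, transpose_transpose, hP.vecMul_apply y hj]

theorem extendOne (hP : BlockFix r P) : BlockFix r (extendOne P) := by
  rw [blockFix_iff] at hP ⊢
  intro i j hj
  induction j using Fin.addCases with
  | left j =>
    induction i using Fin.addCases with
    | left i => simpa [_root_.extendOne, one_apply] using hP i j hj
    | right i => simp [_root_.extendOne, one_apply, Fin.ext_iff]; omega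
  | right j =>
    induction i using Fin.addCases with
    | left i => simp [_root_.extendOne, one_apply, Fin.ext_iff]; omega
    | right i => simp [_root_.extendOne, one_apply]

end BlockFix

theorem transpose_permMatrix_inv_mul_mul {R ι : Type*} [NonAssocSemiring R] [Fintype ι]
    [DecidableEq ι] (σ : Equiv.Perm ι) (M : Matrix ι ι R) :
    (σ⁻¹.permMatrix R)ᵀ * M * σ⁻¹.permMatrix R = M.submatrix σ σ := by
  rw [transpose_permMatrix, inv_inv, PEquiv.toMatrix_toPEquiv_mul,
    PEquiv.mul_toMatrix_toPEquiv, submatrix_submatrix]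
  rfl

theorem det_permMatrix_eq_one_or {ι : Type*} [Fintype ι] [DecidableEq ι] (σ : Equiv.Perm ι) :
    (σ.permMatrix ℤ).det = 1 ∨ (σ.permMatrix ℤ).det = -1 := by
  rcases Int.units_eq_one_or (Equiv.Perm.sign σ) with h | h <;> simp [h]

theorem blockFix_permMatrix_inv {r n : ℕ} {σ : Equiv.Perm (Fin n)}
    (hσ : ∀ i : Fin n, (i : ℕ) < r → σ i = i) : BlockFix r (σ⁻¹.permMatrix ℤ) := by
  rw [blockFix_iff]
  intro i j hj
  simp [PEquiv.toMatrix_apply, one_apply, Equiv.symm_apply_eq, hσ j hj]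

section Swap

variable {R : Type*} [CommRing R] {n : ℕ}

def nestedEnlargement (V : Matrix (Fin n) (Fin n) R) (x y : Fin n → R)
    (D : Matrix (Fin 2) (Fin 2) R) (x' y' : Fin n → R) (D' : Matrix (Fin 2) (Fin 2) R) :
    Matrix ((Fin n ⊕ Fin 2) ⊕ Fin 2) ((Fin n ⊕ Fin 2) ⊕ Fin 2) R :=
  fromBlocks (fromBlocks V (vecMulVec y (Pi.single 0 1)) (vecMulVec (Pi.single 0 1) x) D)
    (fromRows (vecMulVec y' (Pi.single 0 1)) 0) (fromCols (vecMulVec (Pi.single 0 1) x') 0) D'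

def swapLastSummands (α β : Type*) : (α ⊕ β) ⊕ β ≃ (α ⊕ β) ⊕ β :=
  (Equiv.sumAssoc α β β).trans
    (((Equiv.refl α).sumCongr (Equiv.sumComm β β)).trans (Equiv.sumAssoc α β β).symm)

theorem nestedEnlargement_submatrix_swap (V : Matrix (Fin n) (Fin n) R) (x y : Fin n → R)
    (D : Matrix (Fin 2) (Fin 2) R) (x' y' : Fin n → R) (D' : Matrix (Fin 2) (Fin 2) R) :
    (nestedEnlargement V x y D x' y' D').submatrix (swapLastSummands _ _) (swapLastSummands _ _)
      = nestedEnlargement V x' y' D' x y D := by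
  ext ((i | i) | i) ((j | j) | j) <;> rfl

def finSumFinSumFinEquiv (n : ℕ) : (Fin n ⊕ Fin 2) ⊕ Fin 2 ≃ Fin (n + 2 + 2) :=
  (finSumFinEquiv.sumCongr (Equiv.refl _)).trans finSumFinEquiv

theorem enlarge_enlarge (V : Matrix (Fin n) (Fin n) R) (x y : Fin n → R)
    (D : Matrix (Fin 2) (Fin 2) R) (x' y' : Fin n → R) (D' : Matrix (Fin 2) (Fin 2) R) :
    enlarge (enlarge V x y D) (Fin.append x' 0) (Fin.append y' 0) D'
      = reindex (finSumFinSumFinEquiv n) (finSumFinSumFinEquiv n)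
          (nestedEnlargement V x y D x' y' D') := by
  ext i j
  obtain ⟨p, rfl⟩ := (finSumFinSumFinEquiv n).surjective i
  obtain ⟨q, rfl⟩ := (finSumFinSumFinEquiv n).surjective j
  rcases p with (p | p) | p <;> rcases q with (q | q) | q <;>
    simp [enlarge, nestedEnlargement, finSumFinSumFinEquiv, vecMulVec_apply]

def swapEnlargements (n : ℕ) : Equiv.Perm (Fin (n + 2 + 2)) :=
  (finSumFinSumFinEquiv n).permCongr (swapLastSummands _ _)

theorem swapEnlargements_apply_of_lt {i : Fin (n + 2 + 2)} (hi : (i : ℕ) < n) :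
    swapEnlargements n i = i := by
  obtain ⟨i, rfl⟩ : ∃ i' : Fin n, i = finSumFinSumFinEquiv n (.inl (.inl i')) :=
    ⟨⟨i, hi⟩, Fin.ext rfl⟩
  simp [swapEnlargements, Equiv.permCongr_apply, swapLastSummands]

theorem enlarge_enlarge_submatrix_swap (V : Matrix (Fin n) (Fin n) R) (x y : Fin n → R)
    (D : Matrix (Fin 2) (Fin 2) R) (x' y' : Fin n → R) (D' : Matrix (Fin 2) (Fin 2) R) :
    (enlarge (enlarge V x y D) (Fin.append x' 0) (Fin.append y' 0) D').submatrix
        (swapEnlargements n) (swapEnlargements n)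
      = enlarge (enlarge V x' y' D') (Fin.append x 0) (Fin.append y 0) D := by
  rw [enlarge_enlarge, enlarge_enlarge, ← nestedEnlargement_submatrix_swap V x y D]
  ext i j
  simp [swapEnlargements, Equiv.permCongr_apply]

end Swap

def IsEnlargementCorner (D : Matrix (Fin 2) (Fin 2) ℤ) : Prop :=
  ∃ z, D = !![z, 1; 0, 0] ∨ D = !![z, 0; 1, 0]

theorem upStrong_enlarge {r n : ℕ} (V : Matrix (Fin n) (Fin n) ℤ) {x y : Fin n → ℤ}
    (hxy : ∀ i : Fin n, (i : ℕ) < r → x i = y i) {D : Matrix (Fin 2) (Fin 2) ℤ}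
    (hD : IsEnlargementCorner D) : UpStrong r ⟨n, V⟩ ⟨n + 2, enlarge V x y D⟩ := by
  obtain ⟨z, rfl | rfl⟩ := hD
  · rw [← enlargeA_eq_enlarge]
    exact .enlA V x y z hxy
  · rw [← enlargeB_eq_enlarge]
    exact .enlB V x y z hxy

theorem append_zero_eq_append_zero_of_lt {r n : ℕ} (hn : r ≤ n) {x y : Fin n → ℤ}
    (hxy : ∀ i : Fin n, (i : ℕ) < r → x i = y i) :
    ∀ i : Fin (n + 2), (i : ℕ) < r → Fin.append x 0 i = Fin.append y 0 i := by
  intro i hi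
  obtain ⟨i, rfl⟩ : ∃ i' : Fin n, i = Fin.castAdd 2 i' := ⟨⟨i, by omega⟩, rfl⟩
  simpa using hxy i hi

inductive StrongReduction (r : ℕ) :
    (Σ n, Matrix (Fin n) (Fin n) ℤ) → (Σ n, Matrix (Fin n) (Fin n) ℤ) → Prop
  | mk {n} (V : Matrix (Fin n) (Fin n) ℤ) (x y : Fin n → ℤ) (D : Matrix (Fin 2) (Fin 2) ℤ)
      (hD : IsEnlargementCorner D) (hxy : ∀ i : Fin n, (i : ℕ) < r → x i = y i)
      (hn : r ≤ n) :
      StrongReduction r ⟨n + 2, enlarge V x y D⟩ ⟨n, V⟩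

theorem StrongStep.upStrong_or_strongReduction {r : ℕ} {M M' : Σ n, Matrix (Fin n) (Fin n) ℤ}
    (h : StrongStep r M M') : UpStrong r M M' ∨ StrongReduction r M M' := by
  cases h with
  | congr V W P hP hdet hW => exact .inl (.congr V W P hP hdet hW)
  | enlA V x y z hxy => exact .inl (.enlA V x y z hxy)
  | enlB V x y z hxy => exact .inl (.enlB V x y z hxy)
  | redA V x y z hxy hn =>
    rw [enlargeA_eq_enlarge]
    exact .inr (.mk V x y _ ⟨z, .inl rfl⟩ hxy hn)
  | redB V x y z hxy hn =>
    rw [enlargeB_eq_enlarge]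
    exact .inr (.mk V x y _ ⟨z, .inr rfl⟩ hxy hn)

namespace StrongReduction

variable {r : ℕ} {E M : Σ n, Matrix (Fin n) (Fin n) ℤ}

theorem upStrong (h : StrongReduction r E M) : UpStrong r M E := by
  obtain ⟨V, x, y, D, hD, hxy, -⟩ := h
  exact upStrong_enlarge V hxy hD

theorem exists_of_congr {n : ℕ} {V P : Matrix (Fin n) (Fin n) ℤ}
    (h : StrongReduction r E ⟨n, V⟩) (hP : BlockFix r P) (hdet : P.det = 1 ∨ P.det = -1) :
    ∃ E', StrongReduction r E' ⟨n, Pᵀ * V * P⟩ ∧ UpStrong r E E' := by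
  cases h with
  | mk V x y D hD hxy hn =>
    have hxy' : ∀ i : Fin n, (i : ℕ) < r → (x ᵥ* P) i = (Pᵀ *ᵥ y) i := fun i hi => by
      rw [hP.vecMul_apply x hi, hP.transpose_mulVec_apply y hi, hxy i hi]
    exact ⟨_, .mk _ _ _ D hD hxy' hn, .congr _ _ (extendOne P) hP.extendOne
      (by rwa [det_extendOne]) (extendOne_transpose_mul_enlarge_mul P V x y D).symm⟩

theorem exists_of_enlarge {n : ℕ} {V : Matrix (Fin n) (Fin n) ℤ}
    (h : StrongReduction r E ⟨n, V⟩) {x' y' : Fin n → ℤ}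
    (hxy' : ∀ i : Fin n, (i : ℕ) < r → x' i = y' i) {D' : Matrix (Fin 2) (Fin 2) ℤ}
    (hD' : IsEnlargementCorner D') :
    ∃ E', StrongReduction r E' ⟨n + 2, enlarge V x' y' D'⟩ ∧
      Relation.ReflTransGen (UpStrong r) E E' := by
  cases h with
  | mk V x y D hD hxy hn =>
    refine ⟨_, .mk _ _ _ D hD (append_zero_eq_append_zero_of_lt hn hxy) (by omega), ?_⟩
    have hswap : UpStrong r
        ⟨n + 2 + 2, enlarge (enlarge V x y D) (Fin.append x' 0) (Fin.append y' 0) D'⟩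
        ⟨n + 2 + 2, enlarge (enlarge V x' y' D') (Fin.append x 0) (Fin.append y 0) D⟩ :=
      .congr _ _ _ (blockFix_permMatrix_inv fun i hi => swapEnlargements_apply_of_lt (by omega))
        (det_permMatrix_eq_one_or _)
        (by rw [transpose_permMatrix_inv_mul_mul, enlarge_enlarge_submatrix_swap])
    exact .head (upStrong_enlarge _ (append_zero_eq_append_zero_of_lt hn hxy') hD') (.single hswap)

theorem exists_of_upStrong {M' : Σ n, Matrix (Fin n) (Fin n) ℤ} (h : StrongReduction r E M)
    (hM : UpStrong r M M') :
    ∃ E', StrongReduction r E' M' ∧ Relation.ReflTransGen (UpStrong r) E E' := by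
  cases hM with
  | congr V W P hP hdet hW =>
    obtain ⟨E', h', hE⟩ := hW ▸ h.exists_of_congr hP hdet
    exact ⟨E', h', .single hE⟩
  | enlA V x y z hxy =>
    rw [enlargeA_eq_enlarge]
    exact h.exists_of_enlarge hxy ⟨z, .inl rfl⟩
  | enlB V x y z hxy =>
    rw [enlargeB_eq_enlarge]
    exact h.exists_of_enlarge hxy ⟨z, .inr rfl⟩

theorem exists_of_reflTransGen {N : Σ n, Matrix (Fin n) (Fin n) ℤ} (h : StrongReduction r E M)
    (hM : Relation.ReflTransGen (UpStrong r) M N) :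
    ∃ E', StrongReduction r E' N ∧ Relation.ReflTransGen (UpStrong r) E E' := by
  induction hM with
  | refl => exact ⟨E, h, .refl⟩
  | tail _ hstep ih =>
    obtain ⟨E', h', hE⟩ := ih
    obtain ⟨E'', h'', hE'⟩ := h'.exists_of_upStrong hstep
    exact ⟨E'', h'', hE.trans hE'⟩

end StrongReduction

/-- Two Strongly S-equivalent matrices have a common stabilization: a matrix `N`
obtained from each of them by a sequence of enlargements and congruences only. -/
theorem stmt8 (r : ℕ) (M M' : Σ n, Matrix (Fin n) (Fin n) ℤ)
    (h : StrongSEquiv r M M') :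
    ∃ N, Relation.ReflTransGen (UpStrong r) M N ∧
      Relation.ReflTransGen (UpStrong r) M' N := by
  induction h using Relation.ReflTransGen.head_induction_on with
  | refl => exact ⟨M', .refl, .refl⟩
  | head hstep _ ih =>
    obtain ⟨N, hN, hM'N⟩ := ih
    rcases hstep.upStrong_or_strongReduction with hup | hred
    · exact ⟨N, .head hup hN, hM'N⟩
    · obtain ⟨E, hEN, hE⟩ := hred.exists_of_reflTransGen hN
      exact ⟨E, hE, hM'N.tail hEN.upStrong⟩
end

section
/- Determinant of an enlargement: if W = ((V, yᵀ, 0),(x, z, 0),(0, 1, 0)) is the (n+2)×(n+2) enlargement of an n×n matrix V, then det(W - tWᵀ) = t·det(V - tVᵀ) as polynomials in t; i.e., enlargement multiplies the Alexander-type determinant det(V - tVᵀ) by a unit factor. -/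
open Matrix Polynomial

/-- Enlargement multiplies the Alexander-type determinant `det(V - t·Vᵀ)` by `t`:
if `W` is the enlargement of `V` by `(x, y, z)`, then
`det(W - t·Wᵀ) = t · det(V - t·Vᵀ)` in `ℤ[t]`. -/
theorem stmt16 (n : ℕ) (V : Matrix (Fin n) (Fin n) ℤ) (x y : Fin n → ℤ) (z : ℤ) :
    ((enlargeB n V x y z).map (Polynomial.C : ℤ → ℤ[X]) -
        (X : ℤ[X]) • ((enlargeB n V x y z)ᵀ).map Polynomial.C).det =
      (X : ℤ[X]) * (V.map (Polynomial.C : ℤ → ℤ[X]) -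
        (X : ℤ[X]) • (Vᵀ).map Polynomial.C).det := by
  set W := enlargeB n V x y z with hW
  set M : Matrix (Fin (n + 2)) (Fin (n + 2)) ℤ[X] :=
    W.map (C : ℤ → ℤ[X]) - (X : ℤ[X]) • Wᵀ.map C with hM
  have hn : (n : ℕ) < n + 2 := by omega
  have hWcol : ∀ i : Fin (n + 2), W i (Fin.last (n + 1)) = 0 := by
    intro i
    simp only [hW, enlargeB, Matrix.of_apply, Fin.val_last]
    split_ifs with h1 h2 h3 h4 h5 h6 <;> omega
  have hWrow : ∀ j : Fin (n + 2), W (Fin.last (n + 1)) j =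
      if (j : ℕ) = n then 1 else 0 := by
    intro j
    simp only [hW, enlargeB, Matrix.of_apply, Fin.val_last]
    split_ifs with h1 h2 h3 h4 h5 <;> omega
  have hWV : ∀ a b : Fin n, W ⟨(a : ℕ), by omega⟩ ⟨(b : ℕ), by omega⟩ = V a b := by
    intro a b
    simp only [hW, enlargeB, Matrix.of_apply]
    rw [dif_pos a.isLt, dif_pos b.isLt]
  have hMcol : ∀ i : Fin (n + 2), M i (Fin.last (n + 1)) =
      if (i : ℕ) = n then -X else 0 := by
    intro i
    simp only [hM, Matrix.sub_apply, Matrix.map_apply, Matrix.smul_apply,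
      Matrix.transpose_apply, hWcol, hWrow, map_zero, smul_eq_mul]
    split_ifs <;> simp
  have hembR : ∀ k : Fin n, (⟨n, hn⟩ : Fin (n + 2)).succAbove ((Fin.last n).succAbove k) =
      ⟨(k : ℕ), by omega⟩ := by
    intro k
    rw [Fin.succAbove_last, Fin.succAbove_of_castSucc_lt _ _ (by
      simp [Fin.lt_def])]
    rfl
  have hembC : ∀ k : Fin n, (Fin.last (n + 1)).succAbove ((Fin.last n).succAbove k) =
      ⟨(k : ℕ), by omega⟩ := by
    intro k
    rw [Fin.succAbove_last, Fin.succAbove_last]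
    rfl
  rw [show M.det = ∑ i : Fin (n + 1).succ, (-1) ^ ((i : ℕ) + ((Fin.last (n + 1) : Fin (n + 2)) : ℕ)) *
      M i (Fin.last (n + 1)) * (M.submatrix i.succAbove (Fin.last (n + 1)).succAbove).det from
    Matrix.det_succ_column M (Fin.last (n + 1))]
  rw [Finset.sum_eq_single (⟨n, hn⟩ : Fin (n + 2))]
  · have hpiv : M (⟨n, hn⟩ : Fin (n + 2)) (Fin.last (n + 1)) = -X := by
      rw [hMcol]; simp
    rw [hpiv]
    set M' := M.submatrix (⟨n, hn⟩ : Fin (n + 2)).succAbove (Fin.last (n + 1)).succAbove with hM'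
    have hsign : ((-1 : ℤ[X]) ^ ((((⟨n, hn⟩ : Fin (n + 2)) : ℕ)) + ((Fin.last (n + 1) : Fin (n + 2)) : ℕ))) = -1 := by
      simp only [Fin.val_last]
      exact Odd.neg_one_pow ⟨n, by ring⟩
    rw [hsign]
    have hrowlast : (⟨n, hn⟩ : Fin (n + 2)).succAbove (Fin.last n) = Fin.last (n + 1) := by
      rw [Fin.succAbove_of_le_castSucc _ _ (by simp [Fin.le_def])]
      rfl
    have hM'row : ∀ j : Fin (n + 1), M' (Fin.last n) j = if (j : ℕ) = n then 1 else 0 := by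
      intro j
      rw [hM', Matrix.submatrix_apply, hrowlast]
      have hcs : ((Fin.last (n + 1)).succAbove j : ℕ) = (j : ℕ) := by
        rw [Fin.succAbove_last]; rfl
      simp only [hM, Matrix.sub_apply, Matrix.map_apply, Matrix.smul_apply,
        Matrix.transpose_apply, smul_eq_mul]
      rw [hWrow, hcs, hWcol]
      split_ifs <;> simp
    rw [show M'.det = ∑ j : Fin n.succ, (-1) ^ (((Fin.last n : Fin (n + 1)) : ℕ) + (j : ℕ)) *
        M' (Fin.last n) j * (M'.submatrix (Fin.last n).succAbove j.succAbove).det from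
      Matrix.det_succ_row M' (Fin.last n)]
    rw [Finset.sum_eq_single (Fin.last n)]
    · rw [hM'row, if_pos (Fin.val_last n)]
      have hsign2 : ((-1 : ℤ[X]) ^ (((Fin.last n : Fin (n + 1)) : ℕ) + ((Fin.last n : Fin (n + 1)) : ℕ))) = 1 := by
        simp only [Fin.val_last]
        exact Even.neg_one_pow ⟨n, rfl⟩
      rw [hsign2]
      have hsub : M'.submatrix (Fin.last n).succAbove (Fin.last n).succAbove =
          V.map (C : ℤ → ℤ[X]) - (X : ℤ[X]) • Vᵀ.map C := by
        refine Matrix.ext fun k l => ?_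
        simp only [hM', Matrix.submatrix_apply]
        rw [hembR k, hembC l]
        simp only [hM, Matrix.sub_apply, Matrix.map_apply, Matrix.smul_apply,
          Matrix.transpose_apply, smul_eq_mul]
        rw [hWV k l, hWV l k]
      rw [hsub]
      ring
    · intro j _ hj
      rw [hM'row]
      have : ¬ ((j : ℕ) = n) := by
        intro h; exact hj (Fin.ext (by simp [h]))
      rw [if_neg this]; ring
    · intro h; exact absurd (Finset.mem_univ _) h
  · intro i _ hi
    rw [hMcol]
    have : ¬ ((i : ℕ) = n) := by
      intro h; exact hi (Fin.ext (by simp [h]))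
    rw [if_neg this]; ring
  · intro h; exact absurd (Finset.mem_univ _) h
end
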